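/- arXiv:2112.13340 — 2 statements merged into one kernel-verified Lean document; each statement's English description precedes it below -/
import Mathlib

section
/- If R is nontrivial, the augmentation ideal I = ker ε of the group algebra AddMonoidAlgebra R G satisfies I^k ≠ 0; hence the nilpotency degree of I is exactly k + 1. -/
/-! Write `y g = single g 1 - 1`. Every `f` differs from `ε f • 1` by a combination of the
`y g`, and `y (g + h) = y g * y h + y g + y h`, so `ker ε` is generated by the `y eᵢ` for the
standard basis `eᵢ` of `G`. In characteristic 2 each `y g` squares to zero because `g + g = 0`,
and an ideal generated by `k` square-zero elements has vanishing `(k + 1)`-st power.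
Conversely `∏ᵢ y eᵢ ∈ (ker ε) ^ k` is nonzero: expanding the product, only the empty subset
contributes to the coefficient at `0`, as no nonempty sum of distinct `eᵢ` vanishes. -/

open Finset AddMonoidAlgebra

namespace Ideal

variable {A : Type*} [CommSemiring A]

theorem sup_pow_add_add_one_le (I J : Ideal A) (n m : ℕ) :
    (I ⊔ J) ^ (n + m + 1) ≤ I ^ (n + 1) ⊔ J ^ (m + 1) := by
  rw [← add_eq_sup, ← add_eq_sup, add_pow, sum_eq_sup]
  refine Finset.sup_le fun i hi => ?_
  by_cases hn : n + 1 ≤ i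
  · exact mul_le_left.trans (mul_le_left.trans ((pow_le_pow_right hn).trans le_sup_left))
  · refine mul_le_left.trans (mul_le_right.trans ((pow_le_pow_right ?_).trans le_sup_right))
    rw [mem_range] at hi
    omega

theorem span_image_pow_card_add_one_eq_bot {ι : Type*} (x : ι → A) (s : Finset ι)
    (hx : ∀ i ∈ s, x i ^ 2 = 0) : span (x '' s) ^ (#s + 1) = ⊥ := by
  classical
  induction s using Finset.induction_on with
  | empty => simp
  | @insert a s ha ih =>
    have ha0 : span {x a} ^ (1 + 1) = ⊥ := by
      rw [span_singleton_pow, hx a (mem_insert_self a s), span_singleton_eq_bot]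
    have hs0 : span (x '' s) ^ (#s + 1) = ⊥ := ih fun i hi => hx i (mem_insert_of_mem hi)
    rw [card_insert_of_notMem ha, coe_insert, Set.image_insert_eq, span_insert, ← le_bot_iff,
      add_comm #s 1]
    calc _ ≤ span {x a} ^ (1 + 1) ⊔ span (x '' s) ^ (#s + 1) := sup_pow_add_add_one_le _ _ 1 #s
      _ = ⊥ := by rw [ha0, hs0, sup_bot_eq]

end Ideal

namespace AddMonoidAlgebra

variable {R G : Type*} [CommRing R] [AddCommMonoid G]

theorem single_add_sub_one (g h : G) :
    single (g + h) (1 : R) - 1 =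
      (single g 1 - 1) * (single h 1 - 1) + (single g 1 - 1) + (single h 1 - 1) := by
  have hmul := single_mul_single g h (1 : R) 1
  rw [mul_one] at hmul
  linear_combination -hmul

theorem single_sub_one_sq_eq_zero [CharP R 2] {g : G} (hg : g + g = 0) :
    (single g (1 : R) - 1) ^ 2 = 0 := by
  have h2 : (2 : R[G]) = 0 := by
    rw [← map_ofNat (algebraMap R R[G]) 2, CharTwo.two_eq_zero, map_zero]
  have hsq : single g (1 : R) * single g 1 = 1 := by rw [single_mul_single, hg, mul_one, one_def]
  linear_combination hsq + (1 - single g (1 : R)) * h2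

theorem single_sub_one_mem_span_of_mem_closure {S : Set G} {g : G}
    (hg : g ∈ AddSubmonoid.closure S) :
    single g (1 : R) - 1 ∈ Ideal.span ((fun s => single s (1 : R) - 1) '' S) := by
  induction hg using AddSubmonoid.closure_induction with
  | mem g hg => exact Ideal.subset_span ⟨g, hg, rfl⟩
  | zero => rw [← one_def, sub_self]; exact Ideal.zero_mem _
  | add g h _ _ hg hh =>
    rw [single_add_sub_one]
    exact add_mem (add_mem (Ideal.mul_mem_right _ _ hg) hg) hh

theorem sub_algebraMap_mem_span_single_sub_one (ε : R[G] →ₐ[R] R)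
    (hε : ∀ g r, ε (single g r) = r) {S : Set G} (hS : AddSubmonoid.closure S = ⊤) (f : R[G]) :
    f - algebraMap R R[G] (ε f) ∈ Ideal.span ((fun s => single s (1 : R) - 1) '' S) := by
  induction f using AddMonoidAlgebra.induction_linear with
  | zero => simp
  | add f f' hf hf' =>
    rw [map_add, map_add, add_sub_add_comm]
    exact add_mem hf hf'
  | single g r =>
    have hsingle : single g r - algebraMap R R[G] (ε (single g r)) =
        algebraMap R R[G] r * (single g 1 - 1) := by
      rw [hε, mul_sub, mul_one, ← Algebra.smul_def, smul_single', mul_one]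
    rw [hsingle]
    exact Ideal.mul_mem_left _ _
      (single_sub_one_mem_span_of_mem_closure (hS ▸ AddSubmonoid.mem_top g))

theorem ker_le_span_single_sub_one (ε : R[G] →ₐ[R] R) (hε : ∀ g r, ε (single g r) = r)
    {ι : Type*} (v : ι → G) (hv : AddSubmonoid.closure (Set.range v) = ⊤) :
    RingHom.ker ε ≤ Ideal.span (Set.range fun i => single (v i) (1 : R) - 1) := by
  intro f hf
  have h := sub_algebraMap_mem_span_single_sub_one (R := R) ε hε hv f
  rwa [RingHom.mem_ker.mp hf, map_zero, sub_zero, ← Set.range_comp] at h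

theorem coeff_zero_prod_single_sub_one {ι : Type*} [Fintype ι] (v : ι → G)
    (hv : ∀ t : Finset ι, t.Nonempty → ∑ i ∈ t, v i ≠ 0) :
    (∏ i, (single (v i) (1 : R) - 1)).coeff 0 = (-1) ^ Fintype.card ι := by
  classical
  have hexpand : ∏ i, (single (v i) (1 : R) - 1) =
      ∑ t : Finset ι, single (∑ i ∈ t, v i) ((-1 : R) ^ #tᶜ) := by
    simp_rw [sub_eq_add_neg, one_def, ← single_neg, Fintype.prod_add, prod_single,
      single_mul_single, sum_const_zero, add_zero, prod_const_one, one_mul, prod_const]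
  rw [hexpand, coeff_sum, Finsupp.finsetSum_apply, sum_eq_single (∅ : Finset ι)]
  · simp
  · intro t _ ht
    rw [coeff_single, Finsupp.single_eq_of_ne (hv t (nonempty_iff_ne_empty.mpr ht)).symm]
  · simp

theorem prod_single_sub_one_ne_zero [Nontrivial R] {ι : Type*} [Fintype ι] (v : ι → G)
    (hv : ∀ t : Finset ι, t.Nonempty → ∑ i ∈ t, v i ≠ 0) :
    ∏ i, (single (v i) (1 : R) - 1) ≠ 0 := by
  intro h
  have hcoeff := coeff_zero_prod_single_sub_one (R := R) v hv
  rw [h] at hcoeff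
  exact (isUnit_neg_one.pow _).ne_zero hcoeff.symm

end AddMonoidAlgebra

theorem ZMod.addSubmonoidClosure_range_pi_single_one (ι : Type*) [Fintype ι] [DecidableEq ι]
    (n : ℕ) [NeZero n] :
    AddSubmonoid.closure (Set.range fun i : ι => Pi.single i (1 : ZMod n)) = ⊤ := by
  refine eq_top_iff.mpr fun g _ => ?_
  rw [← Finset.univ_sum_single g]
  refine sum_mem fun i _ => ?_
  rw [← ZMod.natCast_zmod_val (g i), ← nsmul_one, Pi.single_smul']
  exact nsmul_mem (AddSubmonoid.subset_closure (Set.mem_range_self i)) _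

theorem Finset.sum_pi_single_one_ne_zero {ι M : Type*} [DecidableEq ι] [AddCommMonoidWithOne M]
    [NeZero (1 : M)] {t : Finset ι} (ht : t.Nonempty) :
    ∑ i ∈ t, Pi.single i (1 : M) ≠ 0 := by
  obtain ⟨j, hj⟩ := ht
  intro h
  simpa [Finset.sum_apply, hj] using congrFun h j

/-- Over a nontrivial commutative ring of characteristic 2, the augmentation ideal `I = ker ε`
of the group algebra of `G = Fin k → ZMod 2` satisfies `I ^ k ≠ 0`; together with
`I ^ (k + 1) = 0`, the nilpotency degree of `I` is exactly `k + 1`. -/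
theorem augmentationIdeal_pow_ne_bot (k : ℕ) (R : Type*) [CommRing R] [Nontrivial R]
    [CharP R 2]
    (ε : AddMonoidAlgebra R (Fin k → ZMod 2) →ₐ[R] R)
    (hε : ∀ (g : Fin k → ZMod 2) (r : R), ε (AddMonoidAlgebra.single g r) = r) :
    (RingHom.ker ε) ^ k ≠ ⊥ ∧ (RingHom.ker ε) ^ (k + 1) = ⊥ := by
  set e : Fin k → Fin k → ZMod 2 := fun i => Pi.single i 1
  set y : Fin k → AddMonoidAlgebra R (Fin k → ZMod 2) := fun i => single (e i) 1 - 1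
  constructor
  · intro hbot
    have hmem : ∏ i, y i ∈ RingHom.ker ε ^ k := by
      simpa using Ideal.prod_mem_prod (s := univ) (I := fun _ => RingHom.ker ε) (x := y)
        fun i _ => by simp [y, hε]
    rw [hbot, Ideal.mem_bot] at hmem
    exact prod_single_sub_one_ne_zero e (fun t => sum_pi_single_one_ne_zero) hmem
  · have hle : RingHom.ker ε ≤ Ideal.span (Set.range y) := ker_le_span_single_sub_one ε hε e
      (ZMod.addSubmonoidClosure_range_pi_single_one (Fin k) 2)
    have hnil := Ideal.span_image_pow_card_add_one_eq_bot y univ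
      fun i _ => single_sub_one_sq_eq_zero (g := e i) (funext fun j => CharTwo.add_self_eq_zero _)
    rw [coe_univ, Set.image_univ, card_univ, Fintype.card_fin] at hnil
    exact le_bot_iff.mp (hnil ▸ Ideal.pow_right_mono hle _)
end

section
/- Every element of the augmentation ideal squares to zero (in particular is nilpotent): if f ∈ AddMonoidAlgebra R G satisfies ε f = 0, then f * f = 0. -/
/-!
In characteristic 2 squaring is additive, and `single g r * single g r = single 0 (r * r)` because
`g + g = 0` in `G`. Hence `f * f = single 0 (ε f * ε f)`, which vanishes when `ε f = 0`.
-/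

namespace AddMonoidAlgebra

variable {R G : Type*} [CommSemiring R]

instance charP [AddMonoid G] (p : ℕ) [CharP R p] : CharP R[G] p :=
  charP_of_injective_algebraMap (fun _ _ h => single_right_injective h) p

theorem mul_self_eq_single_zero [AddCommMonoid G] [CharP R 2] (hG : ∀ a : G, a + a = 0)
    (f : R[G]) :
    f * f = single 0 ((f.coeff.sum fun _ r => r) * f.coeff.sum fun _ r => r) := by
  conv_lhs => rw [← sum_coeff_single f]
  simp only [Finsupp.sum, CharTwo.sum_mul_self, single_mul_single, hG]
  exact (map_sum (singleAddHom 0) _ _).symm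

theorem eq_coeff_sum_of_map_single {F : Type*} [AddMonoid G] [FunLike F R[G] R]
    [AddMonoidHomClass F R[G] R] (ε : F) (hε : ∀ g r, ε (single g r) = r) (f : R[G]) :
    ε f = f.coeff.sum fun _ r => r := by
  conv_lhs => rw [← sum_coeff_single f]
  simp only [map_finsuppSum, hε]

end AddMonoidAlgebra

/-- Over a commutative ring of characteristic 2, every element of the augmentation ideal of the
group algebra of `G = Fin k → ZMod 2` squares to zero. -/
theorem augmentationIdeal_sq_eq_zero (k : ℕ) (R : Type*) [CommRing R] [CharP R 2]
    (ε : AddMonoidAlgebra R (Fin k → ZMod 2) →ₐ[R] R)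
    (hε : ∀ (g : Fin k → ZMod 2) (r : R), ε (AddMonoidAlgebra.single g r) = r)
    (f : AddMonoidAlgebra R (Fin k → ZMod 2)) (hf : ε f = 0) :
    f * f = 0 := by
  have hG : ∀ a : Fin k → ZMod 2, a + a = 0 := fun a => funext fun i => CharTwo.add_self_eq_zero _
  rw [AddMonoidAlgebra.mul_self_eq_single_zero hG,
    ← AddMonoidAlgebra.eq_coeff_sum_of_map_single ε hε, hf, mul_zero, AddMonoidAlgebra.single_zero]
end
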